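/- The potential V(r) = (k²+1)/r² + (2k/r²)·cos(I(r)) is space-repulsive: -V'(r) = 2(k²+1)/r³ + (4k/r³)cos(I(r)) + (2k²/r³)sin²(I(r)) ≥ 2(k-1)²/r³ for all r > 0. -/

import Mathlib

open Real Set

/-!
The profile `I = 2 arctan (r ^ k)` solves `r I' = k sin I`, because `sin (2 arctan x) = 2x / (1 + x²)`.
Differentiating `V` with this ODE gives the stated formula for `-V'`, and since `cos I ≥ -1`,
`r³ (-V') - 2 (k - 1)² = 4k (1 + cos I) + 2k² sin² I ≥ 0`.
-/

lemma sin_two_mul_arctan (x : ℝ) : sin (2 * arctan x) = 2 * x / (1 + x ^ 2) := by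
  rw [sin_two_mul, sin_arctan, cos_arctan, mul_assoc, div_mul_div_comm,
    mul_self_sqrt (by positivity)]
  ring

lemma hasDerivAt_two_mul_arctan_pow (k : ℕ) {r : ℝ} (hr : r ≠ 0) :
    HasDerivAt (fun s : ℝ => 2 * arctan (s ^ k)) (k * sin (2 * arctan (r ^ k)) / r) r := by
  have hpow : (k : ℝ) * r ^ (k - 1) * r = k * r ^ k := by
    cases k with
    | zero => simp
    | succ m => rw [mul_assoc, ← pow_succ]; rfl
  refine ((hasDerivAt_pow k r).arctan.const_mul 2).congr_deriv ?_
  rw [sin_two_mul_arctan, eq_div_of_mul_eq hr hpow]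
  ring

lemma hasDerivAt_inv_sq_potential {I : ℝ → ℝ} {a b k r : ℝ} (hr : r ≠ 0)
    (hI : HasDerivAt I (k * sin (I r) / r) r) :
    HasDerivAt (fun s => a / s ^ 2 + b / s ^ 2 * cos (I s))
      (-(2 * a / r ^ 3 + 2 * b / r ^ 3 * cos (I r) + b * k / r ^ 3 * sin (I r) ^ 2)) r := by
  have hsq : HasDerivAt (fun s : ℝ => s ^ 2) (2 * r) r := by simpa using hasDerivAt_pow 2 r
  have hr2 : r ^ 2 ≠ 0 := pow_ne_zero 2 hr
  refine (((hasDerivAt_const r a).div hsq hr2).add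
    (((hasDerivAt_const r b).div hsq hr2).mul ((hasDerivAt_cos (I r)).comp r hI))).congr_deriv ?_
  simp only [Pi.div_apply, Function.comp_apply]
  field_simp
  ring

lemma sub_one_sq_div_le {k r : ℝ} (hk : 0 ≤ k) (hr : 0 < r) (θ : ℝ) :
    2 * (k - 1) ^ 2 / r ^ 3
      ≤ 2 * (k ^ 2 + 1) / r ^ 3 + 4 * k / r ^ 3 * cos θ + 2 * k ^ 2 / r ^ 3 * sin θ ^ 2 := by
  have hcos : 0 ≤ k * (1 + cos θ) := mul_nonneg hk (by linarith [neg_one_le_cos θ])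
  have hnum : 2 * (k - 1) ^ 2 ≤ 2 * (k ^ 2 + 1) + 4 * k * cos θ + 2 * k ^ 2 * sin θ ^ 2 := by
    nlinarith [mul_nonneg (sq_nonneg k) (sq_nonneg (sin θ))]
  calc 2 * (k - 1) ^ 2 / r ^ 3
      ≤ (2 * (k ^ 2 + 1) + 4 * k * cos θ + 2 * k ^ 2 * sin θ ^ 2) / r ^ 3 := by gcongr
    _ = _ := by ring

theorem potential_space_repulsive_general (k : ℕ)
    (I V : ℝ → ℝ) (hI : ∀ r : ℝ, I r = 2 * Real.arctan (r ^ k))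
    (hV : ∀ r : ℝ, V r = ((k : ℝ) ^ 2 + 1) / r ^ 2 + (2 * (k : ℝ) / r ^ 2) * Real.cos (I r)) :
    ∀ r : ℝ, 0 < r →
      -deriv V r
        = 2 * ((k : ℝ) ^ 2 + 1) / r ^ 3 + (4 * (k : ℝ) / r ^ 3) * Real.cos (I r)
          + (2 * (k : ℝ) ^ 2 / r ^ 3) * Real.sin (I r) ^ 2 ∧
      2 * ((k : ℝ) - 1) ^ 2 / r ^ 3 ≤ -deriv V r := by
  intro r hr
  have hI' : HasDerivAt I (k * sin (I r) / r) r := by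
    rw [funext hI]
    exact hasDerivAt_two_mul_arctan_pow k hr.ne'
  have hformula : -deriv V r
      = 2 * ((k : ℝ) ^ 2 + 1) / r ^ 3 + 4 * (k : ℝ) / r ^ 3 * cos (I r)
        + 2 * (k : ℝ) ^ 2 / r ^ 3 * sin (I r) ^ 2 := by
    rw [funext hV, (hasDerivAt_inv_sq_potential hr.ne' hI').deriv]
    ring
  exact ⟨hformula, hformula ▸ sub_one_sq_div_le k.cast_nonneg hr (I r)⟩

/-- Space-repulsivity of the conjugated potential:
`-V'(r) = 2(k²+1)/r³ + (4k/r³) cos(I r) + (2k²/r³) sin²(I r) ≥ 2(k-1)²/r³` for all `r > 0`. -/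
theorem potential_space_repulsive (k : ℕ) (hk : 1 ≤ k)
    (I V : ℝ → ℝ) (hI : ∀ r : ℝ, I r = 2 * Real.arctan (r ^ k))
    (hV : ∀ r : ℝ, V r = ((k : ℝ) ^ 2 + 1) / r ^ 2 + (2 * (k : ℝ) / r ^ 2) * Real.cos (I r)) :
    ∀ r : ℝ, 0 < r →
      -deriv V r
        = 2 * ((k : ℝ) ^ 2 + 1) / r ^ 3 + (4 * (k : ℝ) / r ^ 3) * Real.cos (I r)
          + (2 * (k : ℝ) ^ 2 / r ^ 3) * Real.sin (I r) ^ 2 ∧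
      2 * ((k : ℝ) - 1) ^ 2 / r ^ 3 ≤ -deriv V r :=
  potential_space_repulsive_general k I V hI hV
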